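/- arXiv:1107.2221 — 2 statements merged into one kernel-verified Lean document; each statement's English description precedes it below -/
import Mathlib

section
/- For every integer t ≥ 2 there exists a disk graph G_t that has ply 3 (and hence contains no K_4 as a subgraph) together with a set X ⊆ V(G_t) such that tw(G_t ∖ X) ≤ 1 while tw(G_t) ≥ |X| − 1 = t − 1. Consequently, neither the class of K_4-free disk graphs nor the class of disk graphs of ply 3 has truly sublinear treewidth. -/
/-!
Hub `i` of `G_t` is a disk of radius `3t` and row `j` a horizontal chain of unit disks; the rows are
pairwise disjoint, the hubs are pairwise disjoint, and hub `i` meets every row. Without the `t` hubs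
only disjoint paths remain, so `tw(G_t ∖ X) ≤ 1`; a clique of `G_t` holds at most one hub and at most
two disks of one row, and disks through a common point form a clique, so the ply is at most `3`.
Hub `i` together with row `i` gives `t` disjoint connected sets that pairwise touch, a `K_t` minor: in
a tree decomposition their traces are pairwise intersecting subtrees, so by the Helly property one bag
meets all of them and `tw(G_t) ≥ t - 1`. A lower bound linear in `|X| = t` is incompatible with any
bound `1 + β |X|^λ`, `λ < 1`.
-/

open SimpleGraph Set Metric

/-- `G` has a tree decomposition of width at most `k`. -/
def SimpleGraph.TreewidthLE {V : Type} (G : SimpleGraph V) (k : ℕ) : Prop :=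
  ∃ (ι : Type) (T : SimpleGraph ι) (bag : ι → Set V),
    T.IsTree ∧
    (∀ v : V, ∃ i, v ∈ bag i) ∧
    (∀ u w : V, G.Adj u w → ∃ i, u ∈ bag i ∧ w ∈ bag i) ∧
    (∀ v : V, (T.induce {i | v ∈ bag i}).Connected) ∧
    (∀ i, (bag i).Finite ∧ (bag i).ncard ≤ k + 1)

/-- The treewidth of a graph: the least width of a tree decomposition. -/
noncomputable def SimpleGraph.treewidth {V : Type} (G : SimpleGraph V) : ℕ :=
  sInf {k | G.TreewidthLE k}

/-- The Euclidean plane. -/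
abbrev Plane : Type := EuclideanSpace ℝ (Fin 2)

/-- `c` assigns to the vertices of `G` centers of closed unit disks realizing `G` as
their intersection graph: two distinct vertices are adjacent iff the corresponding unit
disks intersect, i.e. iff their centers are at distance at most `2`. -/
def IsUnitDiskRealization {V : Type} (G : SimpleGraph V) (c : V → Plane) : Prop :=
  ∀ u v : V, G.Adj u v ↔ u ≠ v ∧ dist (c u) (c v) ≤ 2

/-- `G` is a unit disk graph. -/
def IsUnitDiskGraph {V : Type} (G : SimpleGraph V) : Prop :=
  ∃ c : V → Plane, IsUnitDiskRealization G c

/-- A class of graphs has truly sublinear treewidth with parameter `lam ∈ (0,1)` if for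
every `η > 0` there exists `β > 0` such that for every graph `G` in the class and every
vertex set `X`, `tw(G ∖ X) ≤ η` implies `tw(G) ≤ η + β·|X|^lam`. -/
def HasTrulySublinearTreewidth (C : ∀ V : Type, SimpleGraph V → Prop) (lam : ℝ) : Prop :=
  ∀ η : ℕ, 0 < η → ∃ β : ℝ, 0 < β ∧
    ∀ (V : Type) [Fintype V] (G : SimpleGraph V), C V G →
      ∀ X : Set V, (G.induce Xᶜ).treewidth ≤ η →
        (G.treewidth : ℝ) ≤ (η : ℝ) + β * (X.ncard : ℝ) ^ lam

/-- `c`, `r` realize `G` as the intersection graph of closed disks in the plane with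
centers `c v` and (positive) radii `r v`: two distinct vertices are adjacent iff the
corresponding disks intersect, i.e. iff `dist (c u) (c v) ≤ r u + r v`. -/
def IsDiskRealization {V : Type} (G : SimpleGraph V) (c : V → Plane) (r : V → ℝ) : Prop :=
  (∀ v, 0 < r v) ∧ ∀ u v : V, G.Adj u v ↔ u ≠ v ∧ dist (c u) (c v) ≤ r u + r v

/-- The family of disks with centers `c` and radii `r` has ply at most `ℓ`: every point
of the plane lies in at most `ℓ` of the disks. -/
def DiskPlyLE {V : Type} (c : V → Plane) (r : V → ℝ) (ℓ : ℕ) : Prop :=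
  ∀ p : Plane, {v : V | dist p (c v) ≤ r v}.encard ≤ (ℓ : ℕ∞)

open Function

namespace SimpleGraph

variable {ι V : Type} {T : SimpleGraph ι} {G : SimpleGraph V} {A B C : Set ι}

lemma exists_isPath_forall_mem_of_preconnected_induce (hA : (T.induce A).Preconnected)
    {u v : ι} (hu : u ∈ A) (hv : v ∈ A) :
    ∃ p : T.Walk u v, p.IsPath ∧ ∀ x ∈ p.support, x ∈ A := by
  classical
  obtain ⟨q⟩ := hA ⟨u, hu⟩ ⟨v, hv⟩
  let q' := q.map (Embedding.induce A).toHom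
  refine ⟨q'.bypass, q'.bypass_isPath, fun x hx => ?_⟩
  obtain ⟨y, -, rfl⟩ := List.mem_map.1 (q.support_map _ ▸ q'.support_bypass_subset_support hx)
  exact y.2

lemma IsAcyclic.forall_mem_support_of_preconnected_induce (hT : T.IsAcyclic)
    (hA : (T.induce A).Preconnected) {u v : ι} (hu : u ∈ A) (hv : v ∈ A)
    (p : T.Walk u v) (hp : p.IsPath) : ∀ x ∈ p.support, x ∈ A := by
  obtain ⟨q, hq, hqA⟩ := exists_isPath_forall_mem_of_preconnected_induce hA hu hv
  obtain rfl : p = q := congrArg Subtype.val ((hT.subsingleton_path u v).elim ⟨p, hp⟩ ⟨q, hq⟩)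
  exact hqA

lemma IsAcyclic.preconnected_induce_inter (hT : T.IsAcyclic) (hA : (T.induce A).Preconnected)
    (hB : (T.induce B).Preconnected) : (T.induce (A ∩ B)).Preconnected := by
  rintro ⟨u, huA, huB⟩ ⟨v, hvA, hvB⟩
  obtain ⟨p, hp, hpA⟩ := exists_isPath_forall_mem_of_preconnected_induce hA huA hvA
  have hpB := hT.forall_mem_support_of_preconnected_induce hB huB hvB p hp
  exact (p.induce (A ∩ B) fun x hx => ⟨hpA x hx, hpB x hx⟩).reachable

lemma IsAcyclic.exists_mem_support_inter (hT : T.IsAcyclic) (hB : (T.induce B).Preconnected)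
    (hC : (T.induce C).Preconnected) (hBC : (B ∩ C).Nonempty) {b c : ι} (p : T.Walk b c)
    (hp : p.IsPath) (hb : b ∈ C) (hc : c ∈ B) : ∃ m ∈ p.support, m ∈ B ∧ m ∈ C := by
  induction p with
  | nil => exact ⟨_, List.mem_singleton_self _, hc, hb⟩
  | @cons b b' c hbb' p ih =>
    by_cases hbB : b ∈ B
    · exact ⟨b, p.cons hbb' |>.start_mem_support, hbB, hb⟩
    obtain ⟨x, hxB, hxC⟩ := hBC
    have hb' : b' ∈ C := by
      have hBuC : (T.induce (B ∪ C)).Preconnected :=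
        (induce_union_connected hB hC ⟨x, hxB, hxC⟩).preconnected
      rcases hT.forall_mem_support_of_preconnected_induce hBuC (Or.inr hb) (Or.inl hc) _ hp b'
        (by simp) with hb'B | hb'C
      · -- the path from `b'` to `x` inside `B` avoids `b`, so prefixing `b` gives the path in `C`
        obtain ⟨r, hr, hrB⟩ := exists_isPath_forall_mem_of_preconnected_induce hB hb'B hxB
        have hbr : (r.cons hbb').IsPath :=
          (Walk.cons_isPath_iff _ _).2 ⟨hr, fun h => hbB (hrB b h)⟩
        exact hT.forall_mem_support_of_preconnected_induce hC hb hxC _ hbr b' (by simp)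
      · exact hb'C
    obtain ⟨m, hm, hmB, hmC⟩ := ih hp.of_cons hb' hc
    exact ⟨m, by simp [hm], hmB, hmC⟩

lemma IsAcyclic.inter_inter_nonempty (hT : T.IsAcyclic) (hA : (T.induce A).Preconnected)
    (hB : (T.induce B).Preconnected) (hC : (T.induce C).Preconnected)
    (hAB : (A ∩ B).Nonempty) (hAC : (A ∩ C).Nonempty) (hBC : (B ∩ C).Nonempty) :
    (A ∩ B ∩ C).Nonempty := by
  obtain ⟨c, hcA, hcB⟩ := hAB
  obtain ⟨b, hbA, hbC⟩ := hAC
  obtain ⟨p, hp, hpA⟩ := exists_isPath_forall_mem_of_preconnected_induce hA hbA hcA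
  obtain ⟨m, hm, hmB, hmC⟩ := hT.exists_mem_support_inter hB hC hBC p hp hbC hcB
  exact ⟨m, ⟨hpA m hm, hmB⟩, hmC⟩

/-- The Helly property of subtrees. -/
lemma IsAcyclic.exists_forall_mem_of_pairwise_inter_nonempty (hT : T.IsAcyclic) {κ : Type}
    [Finite κ] [Nonempty κ] (S : κ → Set ι) (hS : ∀ k, (T.induce (S k)).Preconnected)
    (hS₂ : ∀ k l, (S k ∩ S l).Nonempty) : ∃ i, ∀ k, i ∈ S k := by
  classical
  have := Fintype.ofFinite κ
  suffices h : ∀ s : Finset κ, ∀ S : κ → Set ι, (∀ k, (T.induce (S k)).Preconnected) →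
      (∀ k l, (S k ∩ S l).Nonempty) → ∀ k₀, ∃ i ∈ S k₀, ∀ k ∈ s, i ∈ S k by
    obtain ⟨i, -, hi⟩ := h Finset.univ S hS hS₂ (Classical.arbitrary κ)
    exact ⟨i, fun k => hi k (Finset.mem_univ k)⟩
  intro s
  induction s using Finset.induction_on with
  | empty =>
    intro S _ hS₂ k₀
    obtain ⟨i, hi, -⟩ := hS₂ k₀ k₀
    exact ⟨i, hi, by simp⟩
  | insert a s _ ih =>
    intro S hS hS₂ k₀
    obtain ⟨i, ⟨hi₀, hia⟩, his⟩ := ih (fun k => S k ∩ S a)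
      (fun k => hT.preconnected_induce_inter (hS k) (hS a))
      (fun k l => by
        obtain ⟨x, ⟨hxk, hxl⟩, hxa⟩ := hT.inter_inter_nonempty (hS k) (hS l) (hS a)
          (hS₂ k l) (hS₂ k a) (hS₂ l a)
        exact ⟨x, ⟨hxk, hxa⟩, hxl, hxa⟩) k₀
    exact ⟨i, hi₀, by simpa [hia] using fun k hk => (his k hk).1⟩

lemma preconnected_induce_iUnion_of_adj {W : Type} {H : SimpleGraph W} (hH : H.Preconnected)
    (f : W → Set ι) (hf : ∀ w, (T.induce (f w)).Preconnected)
    (hadj : ∀ u v, H.Adj u v → (f u ∩ f v).Nonempty) : (T.induce (⋃ w, f w)).Preconnected := by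
  rintro ⟨x, hx⟩ ⟨y, hy⟩
  obtain ⟨u, hxu⟩ := mem_iUnion.1 hx
  obtain ⟨w, hyw⟩ := mem_iUnion.1 hy
  obtain ⟨p⟩ := hH u w
  induction p generalizing x with
  | nil => exact (hf _ ⟨x, hxu⟩ ⟨y, hyw⟩).map (T.induceHomOfLE (subset_iUnion f _)).toHom
  | cons huu' p ih =>
    obtain ⟨z, hzu, hzu'⟩ := hadj _ _ huu'
    exact ((hf _ ⟨x, hxu⟩ ⟨z, hzu⟩).map (T.induceHomOfLE (subset_iUnion f _)).toHom).trans
      (ih z (mem_iUnion.2 ⟨_, hzu'⟩) hzu' hyw)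

/-- The traces of the branch sets of a clique minor on the decomposition tree are pairwise
intersecting subtrees, so by the Helly property a single bag meets all of them. -/
theorem TreewidthLE.card_le_of_branchSets {κ : Type} [Finite κ] {w : ℕ} (h : G.TreewidthLE w)
    (B : κ → Set V) (hB : ∀ k, (G.induce (B k)).Connected) (hdisj : Pairwise (Disjoint on B))
    (hadj : Pairwise fun k l => ∃ u ∈ B k, ∃ v ∈ B l, G.Adj u v) : Nat.card κ ≤ w + 1 := by
  cases isEmpty_or_nonempty κ
  · simp
  obtain ⟨ι, T, bag, hT, hcover, hedge, hbag, hsize⟩ := h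
  let S k := ⋃ v : B k, {i | (v : V) ∈ bag i}
  have hS : ∀ k, (T.induce (S k)).Preconnected := fun k =>
    preconnected_induce_iUnion_of_adj (hB k).preconnected _ (fun v => (hbag v).preconnected)
      fun u v huv => hedge u v huv
  have hS₂ : ∀ k l, (S k ∩ S l).Nonempty := by
    intro k l
    obtain rfl | hkl := eq_or_ne k l
    · obtain ⟨v⟩ := (hB k).nonempty
      obtain ⟨i, hi⟩ := hcover v
      exact ⟨i, mem_iUnion.2 ⟨v, hi⟩, mem_iUnion.2 ⟨v, hi⟩⟩
    · obtain ⟨u, hu, v, hv, huv⟩ := hadj hkl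
      obtain ⟨i, hui, hvi⟩ := hedge u v huv
      exact ⟨i, mem_iUnion.2 ⟨⟨u, hu⟩, hui⟩, mem_iUnion.2 ⟨⟨v, hv⟩, hvi⟩⟩
  obtain ⟨i, hi⟩ := hT.2.exists_forall_mem_of_pairwise_inter_nonempty S hS hS₂
  choose g hg using fun k => mem_iUnion.1 (hi k)
  have hginj : Injective fun k => (g k : V) := fun k l (hkl : (g k : V) = g l) => by
    by_contra hne
    exact Set.disjoint_left.1 (hdisj hne) (g k).2 (hkl ▸ (g l).2)
  calc Nat.card κ = (Set.range fun k => (g k : V)).ncard := (ncard_range_of_injective hginj).symm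
    _ ≤ (bag i).ncard := ncard_le_ncard (range_subset_iff.2 hg) (hsize i).1
    _ ≤ w + 1 := (hsize i).2

lemma treewidthLE_natCard [Finite V] (G : SimpleGraph V) : G.TreewidthLE (Nat.card V) := by
  refine ⟨Unit, ⊥, fun _ => univ, ⟨⟨fun _ _ => .of_subsingleton⟩, isAcyclic_bot⟩,
    fun v => ⟨(), mem_univ v⟩, fun u v _ => ⟨(), mem_univ u, mem_univ v⟩,
    fun v => ?_, fun _ => ⟨finite_univ, by simp⟩⟩
  have : Nonempty {i : Unit | v ∈ univ} := ⟨⟨(), mem_univ v⟩⟩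
  exact Connected.of_subsingleton

lemma TreewidthLE.treewidth_le {w : ℕ} (h : G.TreewidthLE w) : G.treewidth ≤ w :=
  Nat.sInf_le h

lemma treewidthLE_treewidth [Finite V] (G : SimpleGraph V) : G.TreewidthLE G.treewidth :=
  Nat.sInf_mem (s := {k | G.TreewidthLE k}) ⟨_, treewidthLE_natCard G⟩

lemma card_le_treewidth_add_one_of_branchSets [Finite V] {κ : Type} [Finite κ]
    (B : κ → Set V) (hB : ∀ k, (G.induce (B k)).Connected) (hdisj : Pairwise (Disjoint on B))
    (hadj : Pairwise fun k l => ∃ u ∈ B k, ∃ v ∈ B l, G.Adj u v) :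
    Nat.card κ ≤ G.treewidth + 1 :=
  (treewidthLE_treewidth G).card_le_of_branchSets B hB hdisj hadj

lemma hasse_nat_adj {a b : ℕ} : (hasse ℕ).Adj a b ↔ a + 1 = b ∨ b + 1 = a := by
  simp only [hasse_adj, Nat.covBy_iff_add_one_eq]

lemma isTree_hasse_nat : (hasse ℕ).IsTree := by
  refine ⟨⟨hasse_preconnected_of_succ ℕ⟩, isAcyclic_iff_forall_adj_isBridge.2 fun a b hab => ?_⟩
  rw [hasse_nat_adj] at hab
  rw [isBridge_iff, reachable_iff_reflTransGen]
  intro hreach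
  -- every vertex reachable from `a` without the edge `ab` lies on the same side of it as `a`
  have hside : ∀ m, Relation.ReflTransGen (hasse ℕ \ fromEdgeSet {s(a, b)}).Adj a m →
      (m ≤ min a b ↔ a ≤ min a b) := by
    intro m hm
    induction hm with
    | refl => rfl
    | tail _ hm ih =>
      rw [sdiff_adj, fromEdgeSet_adj, hasse_nat_adj] at hm
      simp only [Set.mem_singleton_iff, Sym2.eq_iff] at hm
      omega
  have := hside b hreach
  omega

/-- The bags are the preimages of the pairs `{l, l + 1}`. -/
lemma treewidthLE_one_of_isContained_hasse_nat (h : G ⊑ hasse ℕ) : G.TreewidthLE 1 := by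
  obtain ⟨f⟩ := h
  refine ⟨ℕ, hasse ℕ, fun l => f ⁻¹' {l, l + 1}, isTree_hasse_nat,
    fun v => ⟨f v, Or.inl rfl⟩, fun u v huv => ?_, fun v => ?_, fun l => ⟨?_, ?_⟩⟩
  · rcases hasse_nat_adj.1 (f.toHom.map_adj huv) with h | h
    · exact ⟨f u, Or.inl rfl, Or.inr h.symm⟩
    · exact ⟨f v, Or.inr h.symm, Or.inl rfl⟩
  · rcases hv : f v with _ | n
    · have : {l | v ∈ f ⁻¹' {l, l + 1}} = {0} := by ext; simp [hv]
      rw [this]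
      exact Connected.of_subsingleton
    · have : {l | v ∈ f ⁻¹' {l, l + 1}} = {n, n + 1} := by
        ext
        simp only [mem_ofPred_eq, mem_preimage, hv, mem_insert_iff, mem_singleton_iff]
        omega
      rw [this]
      exact induce_pair_connected_of_adj (hasse_nat_adj.2 (Or.inl rfl))
  · exact (toFinite _).preimage f.injective.injOn
  · calc (f ⁻¹' {l, l + 1}).ncard ≤ ({l, l + 1} : Set ℕ).ncard :=
          ncard_le_ncard_of_injOn f (fun _ h => h) f.injective.injOn
      _ ≤ 1 + 1 := ncard_insert_le _ _ |>.trans_eq (by rw [ncard_singleton])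

lemma cliqueFree_add_one_of_isIndepSet {X : Set V} {n : ℕ} (hX : G.IsIndepSet X)
    (h : G.CliqueFreeOn Xᶜ n) : G.CliqueFree (n + 1) := by
  classical
  intro s hs
  by_cases hsX : ∃ a ∈ s, a ∈ X
  · obtain ⟨a, has, haX⟩ := hsX
    refine h (fun b hb hbX => ?_) (hs.erase_of_mem has)
    obtain ⟨hba, hbs⟩ := Finset.mem_erase.1 hb
    exact hX hbX haX hba (hs.isClique hbs has hba)
  · push Not at hsX
    exact CliqueFreeOn.mono G n.le_succ h (fun b hb => hsX b hb) hs

lemma Connected.induce_range {W : Type} {H : SimpleGraph W}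
    (hH : H.Connected) (f : H →g G) : (G.induce (range f)).Connected :=
  hH.map ⟨fun w => ⟨f w, mem_range_self w⟩, fun h => f.map_rel h⟩ (by
    rintro ⟨_, w, rfl⟩
    exact ⟨w, rfl⟩)

end SimpleGraph

lemma dist_vec_two_le_iff {a b c d s : ℝ} (hs : 0 ≤ s) :
    dist !₂[a, b] !₂[c, d] ≤ s ↔ (a - c) ^ 2 + (b - d) ^ 2 ≤ s ^ 2 := by
  simp [EuclideanSpace.dist_eq, Fin.sum_univ_two, Real.dist_eq, sq_abs, Real.sqrt_le_left hs]

lemma diskPlyLE_of_cliqueFree {V : Type} {G : SimpleGraph V} {c : V → Plane} {r : V → ℝ}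
    {ℓ : ℕ} (hG : IsDiskRealization G c r) (h : G.CliqueFree (ℓ + 1)) : DiskPlyLE c r ℓ := by
  intro p
  by_contra! hp
  obtain ⟨s, hsp, hs⟩ := exists_subset_encard_eq (Order.add_one_le_of_lt hp)
  have hsfin : s.Finite := finite_of_encard_eq_coe hs
  refine h hsfin.toFinset ⟨fun u hu v hv huv => (hG.2 u v).2 ⟨huv, ?_⟩, ?_⟩
  · have hu' := hsp (hsfin.mem_toFinset.1 hu)
    have hv' := hsp (hsfin.mem_toFinset.1 hv)
    calc dist (c u) (c v) ≤ dist p (c u) + dist p (c v) := dist_triangle_left _ _ _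
      _ ≤ r u + r v := add_le_add hu' hv'
  · have := hsfin.encard_eq_coe_toFinset_card
    rw [hs] at this
    exact_mod_cast this.symm

def diskGraph {V : Type} (c : V → Plane) (r : V → ℝ) : SimpleGraph V where
  Adj u v := u ≠ v ∧ dist (c u) (c v) ≤ r u + r v
  symm := ⟨fun _ _ h => ⟨h.1.symm, by rw [_root_.dist_comm, add_comm]; exact h.2⟩⟩
  loopless := ⟨fun _ h => h.1 rfl⟩

lemma isDiskRealization_diskGraph {V : Type} {c : V → Plane} {r : V → ℝ} (hr : ∀ v, 0 < r v) :
    IsDiskRealization (diskGraph c r) c r :=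
  ⟨hr, fun _ _ => Iff.rfl⟩

namespace HubRow

variable (t : ℕ)

abbrev Vertex : Type := Fin t ⊕ Fin t × Fin (4 * t ^ 2 + 1)

/-- Hub `i` is centred at `(8ti, 0)` with radius `3t`; the `k`-th disk of row `j` is the unit disk
centred at `(2k, 3j)`. -/
noncomputable def center : Vertex t → Plane
  | .inl i => !₂[8 * t * i, 0]
  | .inr (j, k) => !₂[2 * k, 3 * j]

noncomputable def radius : Vertex t → ℝ
  | .inl _ => 3 * t
  | .inr _ => 1

noncomputable def graph : SimpleGraph (Vertex t) := diskGraph (center t) (radius t)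

def hubs : Set (Vertex t) := range Sum.inl

def row (j : Fin t) : Set (Vertex t) := range fun k => .inr (j, k)

def hubColumn (i : Fin t) : Fin (4 * t ^ 2 + 1) := ⟨4 * t * i, by nlinarith [i.isLt]⟩

def branchSet (i : Fin t) : Set (Vertex t) := insert (.inl i) (row t i)

variable {t}

lemma graph_adj {u v : Vertex t} :
    (graph t).Adj u v ↔ u ≠ v ∧ dist (center t u) (center t v) ≤ radius t u + radius t v :=
  Iff.rfl

lemma radius_pos (v : Vertex t) : 0 < radius t v := by
  rcases v with i | _
  · have : (0 : ℝ) < t := by exact_mod_cast i.pos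
    simp only [radius]
    positivity
  · simp [radius]

lemma not_adj_inl_inl (i i' : Fin t) : ¬ (graph t).Adj (.inl i) (.inl i') := by
  rintro ⟨hne, hd⟩
  have hii' : (i : ℤ) ≠ i' := by exact_mod_cast Fin.val_injective.ne (ne_of_apply_ne Sum.inl hne)
  have h1 : (1 : ℝ) ≤ ((i : ℤ) - i' : ℤ) ^ 2 := by
    exact_mod_cast (one_le_sq_iff_one_le_abs _).2 (Int.one_le_abs (sub_ne_zero.2 hii'))
  have ht : (1 : ℝ) ≤ t := by exact_mod_cast i.pos
  simp only [center, radius] at hd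
  rw [dist_vec_two_le_iff (by positivity)] at hd
  push_cast at h1
  nlinarith

lemma adj_inr_inr_iff {j j' : Fin t} {k k' : Fin (4 * t ^ 2 + 1)} :
    (graph t).Adj (.inr (j, k)) (.inr (j', k')) ↔
      j = j' ∧ ((k : ℕ) + 1 = k' ∨ (k' : ℕ) + 1 = k) := by
  simp only [graph_adj, center, radius, dist_vec_two_le_iff (show (0 : ℝ) ≤ 1 + 1 by norm_num)]
  constructor
  · rintro ⟨hne, hd⟩
    have hZ : 4 * ((k : ℤ) - k') ^ 2 + 9 * ((j : ℤ) - j') ^ 2 ≤ 4 := by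
      exact_mod_cast (by linarith : 4 * ((k : ℝ) - k') ^ 2 + 9 * ((j : ℝ) - j') ^ 2 ≤ 4)
    have hj := abs_lt.1 <| (sq_lt_one_iff_abs_lt_one _).1 (by nlinarith [sq_nonneg ((k : ℤ) - k')] :
      ((j : ℤ) - j') ^ 2 < 1)
    have hk := abs_le.1 <| (sq_le_one_iff_abs_le_one _).1 (by nlinarith [sq_nonneg ((j : ℤ) - j')] :
      ((k : ℤ) - k') ^ 2 ≤ 1)
    obtain rfl : j = j' := Fin.ext (by omega)
    have : (k : ℕ) ≠ k' := fun h => hne (by rw [Fin.ext h])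
    omega
  · rintro ⟨rfl, hk | hk⟩ <;>
    · refine ⟨fun h => ?_, ?_⟩
      · simp only [Sum.inr.injEq, Prod.mk.injEq, Fin.ext_iff, true_and] at h
        omega
      rw [← hk]
      push_cast
      nlinarith

lemma adj_inl_hubColumn (i j : Fin t) : (graph t).Adj (.inl i) (.inr (j, hubColumn t i)) := by
  refine ⟨Sum.inl_ne_inr, ?_⟩
  simp only [center, radius, hubColumn]
  rw [dist_vec_two_le_iff (by positivity)]
  have hj : (j : ℝ) + 1 ≤ t := by exact_mod_cast j.isLt
  push_cast
  nlinarith [j.val.cast_nonneg (α := ℝ)]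

lemma isIndepSet_hubs : (graph t).IsIndepSet (hubs t) := by
  rintro _ ⟨i, rfl⟩ _ ⟨i', rfl⟩ -
  exact not_adj_inl_inl i i'

lemma ncard_hubs : (hubs t).ncard = t := by
  rw [hubs, ncard_range_of_injective Sum.inl_injective, Nat.card_eq_fintype_card,
    Fintype.card_fin]

lemma exists_eq_inr_of_notMem_hubs {v : Vertex t} (hv : v ∉ hubs t) : ∃ p, v = .inr p := by
  rcases v with i | p
  · exact absurd (mem_range_self i) hv
  · exact ⟨p, rfl⟩

/-- Numbering the non-hub vertices row by row embeds them into the path `hasse ℕ`. -/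
lemma induce_compl_hubs_isContained : (graph t).induce (hubs t)ᶜ ⊑ hasse ℕ := by
  let code : Vertex t → ℕ
    | .inl _ => 0
    | .inr p => finProdFinEquiv p
  refine ⟨⟨⟨fun v => code v, fun {u v} huv => ?_⟩, fun u v huv => ?_⟩⟩
  · obtain ⟨⟨j, k⟩, hu⟩ := exists_eq_inr_of_notMem_hubs u.2
    obtain ⟨⟨j', k'⟩, hv⟩ := exists_eq_inr_of_notMem_hubs v.2
    have : (graph t).Adj u v := huv
    rw [hu, hv, adj_inr_inr_iff] at this
    obtain ⟨rfl, hk⟩ := this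
    simp only [hu, hv, code, hasse_nat_adj, finProdFinEquiv_apply_val]
    omega
  · obtain ⟨p, hu⟩ := exists_eq_inr_of_notMem_hubs u.2
    obtain ⟨p', hv⟩ := exists_eq_inr_of_notMem_hubs v.2
    have : code u = code v := huv
    rw [hu, hv] at this
    simp only [code, Fin.val_inj, EmbeddingLike.apply_eq_iff_eq] at this
    exact Subtype.ext (by rw [hu, hv, this])

lemma cliqueFree_four : (graph t).CliqueFree 4 :=
  cliqueFree_add_one_of_isIndepSet isIndepSet_hubs <| (cliqueFree_induce_iff _ _ 3).1 <|
    cliqueFree_hasse_three.comap induce_compl_hubs_isContained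

lemma treewidth_induce_compl_hubs_le_one : ((graph t).induce (hubs t)ᶜ).treewidth ≤ 1 :=
  (treewidthLE_one_of_isContained_hasse_nat induce_compl_hubs_isContained).treewidth_le

lemma connected_induce_row (j : Fin t) : ((graph t).induce (row t j)).Connected :=
  (pathGraph_connected _).induce_range (G := graph t)
    ⟨fun k => .inr (j, k), fun h => adj_inr_inr_iff.2 ⟨rfl, pathGraph_adj.1 h⟩⟩

lemma connected_induce_branchSet (i : Fin t) :
    ((graph t).induce (branchSet t i)).Connected := by
  rw [branchSet, insert_eq]
  exact connected_induce_union Connected.of_subsingleton.preconnected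
    (connected_induce_row i).preconnected (mem_singleton _) (mem_range_self (hubColumn t i))
    (adj_inl_hubColumn i i)

lemma pairwise_disjoint_branchSet : Pairwise (Disjoint on branchSet t) := by
  intro i i' hii'
  rw [onFun, branchSet, branchSet, row, row, disjoint_insert_left, disjoint_insert_right]
  simp [hii', Set.disjoint_left, hii'.symm]

lemma le_treewidth_add_one : t ≤ (graph t).treewidth + 1 := by
  simpa using card_le_treewidth_add_one_of_branchSets (branchSet t) connected_induce_branchSet
    pairwise_disjoint_branchSet fun i i' _ =>
      ⟨_, mem_insert _ _, _, mem_insert_of_mem _ (mem_range_self _), adj_inl_hubColumn i i'⟩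

variable (t)

lemma isDiskRealization : IsDiskRealization (graph t) (center t) (radius t) :=
  isDiskRealization_diskGraph radius_pos

lemma diskPlyLE_three : DiskPlyLE (center t) (radius t) 3 :=
  diskPlyLE_of_cliqueFree (isDiskRealization t) cliqueFree_four

lemma sub_one_le_treewidth : t - 1 ≤ (graph t).treewidth :=
  Nat.sub_le_iff_le_add.2 le_treewidth_add_one

end HubRow

/-- With `η = 1`: for large `t`, `β t^λ ≤ t / 2`, against `t - 1 ≤ 1 + β t^λ`. -/
lemma not_hasTrulySublinearTreewidth {C : ∀ V : Type, SimpleGraph V → Prop} {lam : ℝ}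
    (hlam : lam < 1) (V : ℕ → Type) [∀ t, Fintype (V t)] (G : ∀ t, SimpleGraph (V t))
    (X : ∀ t, Set (V t)) (hC : ∀ t, C (V t) (G t)) (hX : ∀ t, (X t).ncard = t)
    (hXtw : ∀ t, ((G t).induce (X t)ᶜ).treewidth ≤ 1) (htw : ∀ t, t - 1 ≤ (G t).treewidth) :
    ¬ HasTrulySublinearTreewidth C lam := by
  intro h
  obtain ⟨β, -, hβ⟩ := h 1 one_pos
  obtain ⟨n, hnβ, hn⟩ := ((((tendsto_rpow_atTop (sub_pos.2 hlam)).comp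
    tendsto_natCast_atTop_atTop).eventually_ge_atTop (2 * β)).and
    (Filter.eventually_ge_atTop 5)).exists
  have hup := hβ (V n) (G n) (hC n) (X n) (hXtw n)
  have hlow : (n : ℝ) ≤ (G n).treewidth + 1 := by exact_mod_cast Nat.sub_le_iff_le_add.1 (htw n)
  have hsub : 2 * β * (n : ℝ) ^ lam ≤ n :=
    calc 2 * β * (n : ℝ) ^ lam ≤ (n : ℝ) ^ (1 - lam) * (n : ℝ) ^ lam :=
          mul_le_mul_of_nonneg_right hnβ (by positivity)
      _ = n := by rw [← Real.rpow_add (by positivity)]; simp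
  have hn5 : (5 : ℝ) ≤ n := by exact_mod_cast hn
  rw [hX] at hup
  push_cast at hup
  linarith

/-- For every integer `t ≥ 2` there is a disk graph `G_t` of ply `3`
(hence `K₄`-free) together with a vertex set `X` with `|X| = t`, `tw(G_t ∖ X) ≤ 1` and
`tw(G_t) ≥ |X| − 1 = t − 1`.  Consequently neither the class of `K₄`-free disk graphs
nor the class of disk graphs of ply `3` has truly sublinear treewidth (for any
parameter `λ ∈ (0,1)`). -/
theorem diskGraphs_not_truly_sublinear_treewidth :
    (∀ t : ℕ, 2 ≤ t →
      ∃ (V : Type) (_ : Fintype V) (G : SimpleGraph V) (c : V → Plane) (r : V → ℝ),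
        IsDiskRealization G c r ∧ DiskPlyLE c r 3 ∧ G.CliqueFree 4 ∧
        ∃ X : Set V, X.ncard = t ∧ (G.induce Xᶜ).treewidth ≤ 1 ∧
          t - 1 ≤ G.treewidth) ∧
    (∀ lam : ℝ, 0 < lam → lam < 1 →
      ¬ HasTrulySublinearTreewidth
          (fun _V G => (∃ c r, IsDiskRealization G c r) ∧ G.CliqueFree 4) lam ∧
      ¬ HasTrulySublinearTreewidth
          (fun _V G => ∃ c r, IsDiskRealization G c r ∧ DiskPlyLE c r 3) lam) := by
  refine ⟨fun t _ => ⟨_, inferInstance, HubRow.graph t, HubRow.center t, HubRow.radius t,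
    HubRow.isDiskRealization t, HubRow.diskPlyLE_three t, HubRow.cliqueFree_four,
    HubRow.hubs t, HubRow.ncard_hubs, HubRow.treewidth_induce_compl_hubs_le_one,
    HubRow.sub_one_le_treewidth t⟩, fun lam _ hlam => ⟨?_, ?_⟩⟩
  · exact not_hasTrulySublinearTreewidth hlam HubRow.Vertex HubRow.graph HubRow.hubs
      (fun t => ⟨⟨_, _, HubRow.isDiskRealization t⟩, HubRow.cliqueFree_four⟩)
      (fun _ => HubRow.ncard_hubs) (fun _ => HubRow.treewidth_induce_compl_hubs_le_one)
      HubRow.sub_one_le_treewidth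
  · exact not_hasTrulySublinearTreewidth hlam HubRow.Vertex HubRow.graph HubRow.hubs
      (fun t => ⟨_, _, HubRow.isDiskRealization t, HubRow.diskPlyLE_three t⟩)
      (fun _ => HubRow.ncard_hubs) (fun _ => HubRow.treewidth_induce_compl_hubs_le_one)
      HubRow.sub_one_le_treewidth
end

section
/- Let G be a graph with no isolated vertex, and suppose that for every vertex v of G the neighborhood N(v) contains no independent set of size greater than τ + 1 (in particular this holds when G is an intersection graph of unit balls in R^d and τ = τ_d is the kissing number of R^d). Then every vertex cover of G, and hence also every connected vertex cover of G, has size at least |V(G)| / (2(τ + 2)). -/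
open SimpleGraph Set

/-- `S` is a vertex cover of `G`: every edge has at least one endpoint in `S`. -/
def SimpleGraph.IsVertexCover' {V : Type} (G : SimpleGraph V) (S : Set V) : Prop :=
  ∀ u w : V, G.Adj u w → u ∈ S ∨ w ∈ S

/-- `S` is an independent set of `G`. -/
def SimpleGraph.IsIndepSet' {V : Type} (G : SimpleGraph V) (S : Set V) : Prop :=
  ∀ a ∈ S, ∀ b ∈ S, a ≠ b → ¬ G.Adj a b

/-!
The complement of a vertex cover `S` is independent and, as no vertex is isolated, each of
its vertices has a neighbour in `S`. So `Sᶜ` is covered by the sets `Sᶜ ∩ N(u)`, `u ∈ S`,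
each an independent subset of `N(u)` and hence of size at most `τ + 1`. This gives
`|V| ≤ |S| + (τ + 1) |S| = (τ + 2) |S|`.
-/

namespace SimpleGraph

variable {V : Type} {G : SimpleGraph V}

theorem IsIndepSet'.mono {s t : Set V} (ht : G.IsIndepSet' t) (hst : s ⊆ t) :
    G.IsIndepSet' s :=
  fun a ha b hb => ht a (hst ha) b (hst hb)

theorem IsVertexCover'.isIndepSet'_compl {S : Set V} (hS : G.IsVertexCover' S) :
    G.IsIndepSet' Sᶜ :=
  fun a ha b hb _ hab => (hS a b hab).elim ha hb

theorem IsIndepSet'.ncard_le_mul_ncard [Finite V] {k : ℕ}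
    (hnbr : ∀ v, ∀ T ⊆ G.neighborSet v, G.IsIndepSet' T → T.ncard ≤ k)
    {I S : Set V} (hI : G.IsIndepSet' I) (hdom : ∀ v ∈ I, ∃ u ∈ S, G.Adj v u) :
    I.ncard ≤ k * S.ncard := by
  set t := (Set.toFinite S).toFinset
  have hcover : I ⊆ ⋃ u ∈ t, I ∩ G.neighborSet u := by
    intro v hv
    obtain ⟨u, huS, hvu⟩ := hdom v hv
    exact Set.mem_biUnion ((Set.toFinite S).mem_toFinset.mpr huS) ⟨hv, hvu.symm⟩
  calc I.ncard ≤ (⋃ u ∈ t, I ∩ G.neighborSet u).ncard := Set.ncard_le_ncard hcover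
    _ ≤ ∑ u ∈ t, (I ∩ G.neighborSet u).ncard := t.set_ncard_biUnion_le _
    _ ≤ ∑ _u ∈ t, k := Finset.sum_le_sum fun u _ =>
        hnbr u _ Set.inter_subset_right (hI.mono Set.inter_subset_left)
    _ = k * S.ncard := by
        rw [Finset.sum_const, smul_eq_mul, mul_comm, Set.ncard_eq_toFinset_card S]

theorem IsVertexCover'.card_le_mul_ncard [Finite V] {k : ℕ} {S : Set V}
    (hS : G.IsVertexCover' S) (hniso : ∀ v, ∃ u, G.Adj v u)
    (hnbr : ∀ v, ∀ T ⊆ G.neighborSet v, G.IsIndepSet' T → T.ncard ≤ k) :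
    Nat.card V ≤ (k + 1) * S.ncard := by
  have hdom : ∀ v ∈ Sᶜ, ∃ u ∈ S, G.Adj v u := fun v hv =>
    let ⟨u, hvu⟩ := hniso v
    ⟨u, (hS v u hvu).resolve_left hv, hvu⟩
  have hcompl := hS.isIndepSet'_compl.ncard_le_mul_ncard hnbr hdom
  rw [← Set.ncard_add_ncard_compl S]
  linarith

end SimpleGraph

/-- Let `G` be a graph with no isolated vertex in which, for every
vertex `v`, every independent set contained in the neighborhood `N(v)` has size at most
`τ + 1` (this holds for intersection graphs of unit balls in `ℝ^d` with `τ = τ_d` the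
kissing number).  Then every vertex cover of `G` — and hence also every connected vertex
cover of `G` — has size at least `|V(G)| / (2(τ + 2))`. -/
theorem vertexCover_ge_of_neighborhood_indep_bound
    {V : Type} [Fintype V] (G : SimpleGraph V) (τ : ℕ)
    (hniso : ∀ v : V, ∃ u : V, G.Adj v u)
    (hnbr : ∀ (v : V) (S : Set V), S ⊆ G.neighborSet v → G.IsIndepSet' S →
      S.ncard ≤ τ + 1) :
    (∀ S : Set V, G.IsVertexCover' S →
        (Fintype.card V : ℝ) / (2 * ((τ : ℝ) + 2)) ≤ (S.ncard : ℝ)) ∧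
      (∀ S : Set V, G.IsVertexCover' S → (G.induce S).Connected →
        (Fintype.card V : ℝ) / (2 * ((τ : ℝ) + 2)) ≤ (S.ncard : ℝ)) := by
  have cover_bound : ∀ S : Set V, G.IsVertexCover' S →
      (Fintype.card V : ℝ) / (2 * ((τ : ℝ) + 2)) ≤ (S.ncard : ℝ) := by
    intro S hS
    have hcard : (Fintype.card V : ℝ) ≤ ((τ : ℝ) + 2) * S.ncard := by
      have := hS.card_le_mul_ncard hniso hnbr
      rw [Nat.card_eq_fintype_card] at this
      exact_mod_cast this
    rw [div_le_iff₀ (by positivity)]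
    nlinarith [Nat.cast_nonneg (α := ℝ) S.ncard]
  exact ⟨cover_bound, fun S hS _ => cover_bound S hS⟩
end
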